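/- Let d ≥ 1 and m ∈ ℕ (possibly m = 0). The function ψ_{ℓ,m}(x) = |x|^{−d/2} · ∏_{j=1}^{m} ln_j(|x|)^{−1/2} is smooth on the region {x ∈ ℝ^d : |x| > e_m} and satisfies there the eigenvalue equation Δψ_{ℓ,m}(x) = W_m(x) · ψ_{ℓ,m}(x), where Δ = Σ_{i=1}^{d} ∂²/∂x_i² is the Laplacian and W_m(x) = d(4−d)/(4|x|²) + (1/|x|²) Σ_{j=1}^{m} ∏_{k=1}^{j} ln_k(|x|)^{−1} + (1/(4|x|²)) ( Σ_{j=1}^{m} ∏_{k=1}^{j} ln_k(|x|)^{−1} )² + (1/(2|x|²)) Σ_{j=1}^{m} Σ_{l=1}^{j} ∏_{s=1}^{l} ∏_{t=1}^{j} ln_s(|x|)^{−1} ln_t(|x|)^{−1}. -/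

import Mathlib

open MeasureTheory Real Filter Topology

noncomputable section

/-- Iterated exponentials: `iterExp 0 = 1`, `iterExp (k+1) = exp (iterExp k)`,
so `iterExp m = e_m`. -/
def iterExp : ℕ → ℝ
  | 0 => 1
  | n + 1 => Real.exp (iterExp n)

/-- Iterated logarithms: `iterLog 1 r = log r`, `iterLog (k+1) r = log (iterLog k r)`. -/
def iterLog : ℕ → ℝ → ℝ
  | 0, r => r
  | n + 1, r => Real.log (iterLog n r)

/-- The Laplacian `Δ f = ∑ i ∂²f/∂x_i²` on `ℝ^d`. -/
def laplacian {d : ℕ} (f : EuclideanSpace ℝ (Fin d) → ℝ) (x : EuclideanSpace ℝ (Fin d)) : ℝ :=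
  ∑ i : Fin d, fderiv ℝ (fun y => fderiv ℝ f y (EuclideanSpace.single i 1)) x
    (EuclideanSpace.single i 1)

/-- The potential `W_m`, as a function of `r = |x|`. -/
def Wpot (d m : ℕ) (r : ℝ) : ℝ :=
  (d : ℝ) * (4 - (d : ℝ)) / (4 * r ^ 2)
  + (1 / r ^ 2) * ∑ j ∈ Finset.Icc 1 m, ∏ k ∈ Finset.Icc 1 j, (iterLog k r)⁻¹
  + (1 / (4 * r ^ 2)) * (∑ j ∈ Finset.Icc 1 m, ∏ k ∈ Finset.Icc 1 j, (iterLog k r)⁻¹) ^ 2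
  + (1 / (2 * r ^ 2)) * ∑ j ∈ Finset.Icc 1 m, ∑ l ∈ Finset.Icc 1 j,
      (∏ s ∈ Finset.Icc 1 l, (iterLog s r)⁻¹) * (∏ t ∈ Finset.Icc 1 j, (iterLog t r)⁻¹)

/-- `elog j s = ln_{j+1}(√s)`. -/
def elog : ℕ → ℝ → ℝ
  | 0 => fun s => Real.log s / 2
  | n + 1 => fun s => Real.log (elog n s)

def Pprod (j : ℕ) (s : ℝ) : ℝ := ∏ k ∈ Finset.range j, (elog k s)⁻¹

def Ssum (m : ℕ) (s : ℝ) : ℝ := ∑ j ∈ Finset.range m, Pprod (j + 1) s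

def Tsum (m : ℕ) (s : ℝ) : ℝ :=
  ∑ j ∈ Finset.range m, (∑ k ∈ Finset.range (j + 1), Pprod (k + 1) s) * Pprod (j + 1) s

def Gfun (d m : ℕ) : ℝ → ℝ :=
  fun s => -((d : ℝ) / 2) * elog 0 s - (1 / 2) * ∑ j ∈ Finset.range m, elog (j + 1) s

lemma iterLog_eq_elog (j : ℕ) (r : ℝ) : iterLog (j + 1) r = elog j (r ^ 2) := by
  induction j with
  | zero =>
    show Real.log r = Real.log (r ^ 2) / 2
    rw [Real.log_pow]; push_cast; ring
  | succ n ih =>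
    show Real.log (iterLog (n + 1) r) = Real.log (elog n (r ^ 2))
    rw [ih]

lemma one_le_iterExp (n : ℕ) : 1 ≤ iterExp n := by
  induction n with
  | zero => simp [iterExp]
  | succ n ih =>
    have := Real.add_one_le_exp (iterExp n)
    simp only [iterExp]; linarith

lemma iterExp_pos (n : ℕ) : 0 < iterExp n := lt_of_lt_of_le one_pos (one_le_iterExp n)

lemma s_pos {m : ℕ} {s : ℝ} (hs : (iterExp m) ^ 2 < s) : 0 < s :=
  lt_trans (pow_pos (iterExp_pos m) 2) hs

lemma elog_gt (j : ℕ) : ∀ (c : ℕ) (s : ℝ), (iterExp (j + 1 + c)) ^ 2 < s →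
    iterExp c < elog j s := by
  induction j with
  | zero =>
    intro c s hs
    have h1 : (0:ℝ) < (iterExp (1 + c)) ^ 2 := pow_pos (iterExp_pos _) 2
    have h2 := Real.log_lt_log h1 hs
    have h3 : Real.log ((iterExp (1 + c)) ^ 2) = 2 * iterExp c := by
      rw [Real.log_pow]
      have : iterExp (1 + c) = Real.exp (iterExp c) := by
        rw [Nat.add_comm]; rfl
      rw [this, Real.log_exp]; push_cast; ring
    show iterExp c < Real.log s / 2
    rw [h3] at h2; linarith
  | succ n ih =>
    intro c s hs
    have h1 : iterExp (c + 1) < elog n s := by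
      apply ih (c + 1)
      have : n + 1 + (c + 1) = n + 1 + 1 + c := by omega
      rw [this]; exact hs
    have h2 := Real.log_lt_log (Real.exp_pos (iterExp c)) (by
      show Real.exp (iterExp c) < elog n s
      exact h1)
    show iterExp c < Real.log (elog n s)
    rwa [Real.log_exp] at h2

lemma elog_pos {m j : ℕ} (hj : j < m) {s : ℝ} (hs : (iterExp m) ^ 2 < s) :
    0 < elog j s := by
  obtain ⟨c, hc⟩ : ∃ c, m = j + 1 + c := ⟨m - j - 1, by omega⟩
  subst hc
  exact lt_trans (lt_of_lt_of_le zero_lt_one (one_le_iterExp c)) (elog_gt j c s hs)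

lemma hasDerivAt_elog {m : ℕ} {s : ℝ} (hs : (iterExp m) ^ 2 < s) :
    ∀ j ≤ m, HasDerivAt (elog j) ((2 * s)⁻¹ * Pprod j s) s := by
  intro j
  induction j with
  | zero =>
    intro _
    have h := (Real.hasDerivAt_log (ne_of_gt (s_pos hs))).div_const 2
    have : s⁻¹ / 2 = (2 * s)⁻¹ * Pprod 0 s := by
      simp [Pprod]; ring
    rw [this] at h; exact h
  | succ n ih =>
    intro hn
    have hpos := elog_pos (by omega : n < m) hs
    have h := ((ih (by omega)).log (ne_of_gt hpos))
    have : (2 * s)⁻¹ * Pprod n s / elog n s = (2 * s)⁻¹ * Pprod (n + 1) s := by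
      simp [Pprod, Finset.prod_range_succ]; ring
    rw [this] at h; exact h

lemma hasDerivAt_Pprod {m : ℕ} {s : ℝ} (hs : (iterExp m) ^ 2 < s) :
    ∀ j ≤ m, HasDerivAt (fun t => Pprod j t)
      (-(2 * s)⁻¹ * ((∑ k ∈ Finset.range j, Pprod (k + 1) s) * Pprod j s)) s := by
  intro j
  induction j with
  | zero =>
    intro _
    have h : HasDerivAt (fun _ : ℝ => (1 : ℝ)) 0 s := hasDerivAt_const s 1
    have e1 : (fun t : ℝ => Pprod 0 t) = fun _ : ℝ => (1 : ℝ) := by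
      funext t; simp [Pprod]
    have e2 : -(2 * s)⁻¹ * ((∑ k ∈ Finset.range 0, Pprod (k + 1) s) * Pprod 0 s) = 0 := by
      simp
    rw [e1, e2]; exact h
  | succ n ih =>
    intro hn
    have hpos := elog_pos (by omega : n < m) hs
    have h1 := ih (by omega)
    have h2 := (hasDerivAt_elog hs n (by omega)).fun_inv (ne_of_gt hpos)
    have h := h1.fun_mul h2
    have e1 : (fun t : ℝ => Pprod n t * (elog n t)⁻¹) = fun t => Pprod (n + 1) t := by
      funext t; simp [Pprod, Finset.prod_range_succ, mul_comm]
    rw [e1] at h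
    refine h.congr_deriv ?_
    have hP : Pprod (n + 1) s = Pprod n s * (elog n s)⁻¹ := by
      simp [Pprod, Finset.prod_range_succ, mul_comm]
    rw [Finset.sum_range_succ, hP]
    have he : elog n s ≠ 0 := ne_of_gt hpos
    have hs0 : s ≠ 0 := ne_of_gt (s_pos hs)
    field_simp [he, hs0]
    ring

lemma hasDerivAt_Gfun {m : ℕ} {s : ℝ} (hs : (iterExp m) ^ 2 < s) (d : ℕ) :
    HasDerivAt (Gfun d m) (-(4 * s)⁻¹ * ((d : ℝ) + Ssum m s)) s := by
  have h0 := ((hasDerivAt_elog hs 0 (Nat.zero_le m)).const_mul (-((d : ℝ) / 2)))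
  have h1 : HasDerivAt (fun t => ∑ j ∈ Finset.range m, elog (j + 1) t)
      (∑ j ∈ Finset.range m, (2 * s)⁻¹ * Pprod (j + 1) s) s := by
    apply HasDerivAt.fun_sum
    intro j hj
    exact hasDerivAt_elog hs (j + 1) (Nat.succ_le_of_lt (Finset.mem_range.mp hj))
  have h := h0.sub (h1.const_mul ((1 : ℝ) / 2))
  refine h.congr_deriv ?_
  have hs0 : s ≠ 0 := ne_of_gt (s_pos hs)
  simp only [Ssum, Pprod, Finset.prod_range_zero, ← Finset.mul_sum]
  field_simp
  ring

lemma hasDerivAt_Ssum {m : ℕ} {s : ℝ} (hs : (iterExp m) ^ 2 < s) :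
    HasDerivAt (fun t => Ssum m t) (-(2 * s)⁻¹ * Tsum m s) s := by
  have h : HasDerivAt (fun t => ∑ j ∈ Finset.range m, Pprod (j + 1) t)
      (∑ j ∈ Finset.range m,
        -(2 * s)⁻¹ * ((∑ k ∈ Finset.range (j + 1), Pprod (k + 1) s) * Pprod (j + 1) s)) s := by
    apply HasDerivAt.fun_sum
    intro j hj
    exact hasDerivAt_Pprod hs (j + 1) (Nat.succ_le_of_lt (Finset.mem_range.mp hj))
  refine h.congr_deriv ?_
  simp [Tsum, Finset.mul_sum]

/-- first derivative of `Gfun`, as a function. -/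
def G1 (d m : ℕ) (s : ℝ) : ℝ := -(4 * s)⁻¹ * ((d : ℝ) + Ssum m s)

/-- second derivative of `Gfun`. -/
def G2 (d m : ℕ) (s : ℝ) : ℝ :=
  (4 * s ^ 2)⁻¹ * ((d : ℝ) + Ssum m s) + (4 * s)⁻¹ * ((2 * s)⁻¹ * Tsum m s)

lemma hasDerivAt_G1 {m : ℕ} {s : ℝ} (hs : (iterExp m) ^ 2 < s) (d : ℕ) :
    HasDerivAt (fun t => G1 d m t) (G2 d m s) s := by
  have hs0 : s ≠ 0 := ne_of_gt (s_pos hs)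
  have ha : HasDerivAt (fun t : ℝ => -(4 * t)⁻¹) ((4 * s ^ 2)⁻¹) s := by
    have h := ((hasDerivAt_id s).const_mul (4 : ℝ)).inv (by
      simp [hs0])
    have h2 := h.neg
    refine h2.congr_deriv ?_
    simp only [id_eq]
    field_simp
  have hb : HasDerivAt (fun t => (d : ℝ) + Ssum m t) (-(2 * s)⁻¹ * Tsum m s) s :=
    (hasDerivAt_Ssum hs).const_add ((d : ℝ))
  have h := ha.fun_mul hb
  refine h.congr_deriv ?_
  simp only [G2, G1]
  field_simp

lemma contDiffAt_elog {m : ℕ} {s : ℝ} (hs : (iterExp m) ^ 2 < s) :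
    ∀ j ≤ m, ContDiffAt ℝ (⊤ : ℕ∞) (elog j) s := by
  intro j
  induction j with
  | zero =>
    intro _
    exact (Real.contDiffAt_log.mpr (ne_of_gt (s_pos hs))).div_const 2
  | succ n ih =>
    intro hn
    exact (ih (by omega)).log (ne_of_gt (elog_pos (by omega : n < m) hs))

lemma contDiffAt_Gfun {m : ℕ} {s : ℝ} (hs : (iterExp m) ^ 2 < s) (d : ℕ) :
    ContDiffAt ℝ (⊤ : ℕ∞) (Gfun d m) s := by
  apply ContDiffAt.sub
  · exact contDiffAt_const.mul (contDiffAt_elog hs 0 (Nat.zero_le m))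
  · refine contDiffAt_const.mul ?_
    apply ContDiffAt.sum
    intro j hj
    exact contDiffAt_elog hs (j + 1) (Nat.succ_le_of_lt (Finset.mem_range.mp hj))

lemma sum_Icc_one (f : ℕ → ℝ) (m : ℕ) :
    ∑ j ∈ Finset.Icc 1 m, f j = ∑ j ∈ Finset.range m, f (j + 1) := by
  induction m with
  | zero => simp
  | succ n ih => rw [Finset.sum_Icc_succ_top (by omega), ih, Finset.sum_range_succ]

lemma prod_Icc_one (f : ℕ → ℝ) (m : ℕ) :
    ∏ j ∈ Finset.Icc 1 m, f j = ∏ j ∈ Finset.range m, f (j + 1) := by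
  induction m with
  | zero => simp
  | succ n ih => rw [Finset.prod_Icc_succ_top (by omega), ih, Finset.prod_range_succ]

lemma Wsum_eq (m : ℕ) {r s : ℝ} (hrs : r ^ 2 = s) :
    ∑ j ∈ Finset.Icc 1 m, ∏ k ∈ Finset.Icc 1 j, (iterLog k r)⁻¹ = Ssum m s := by
  rw [sum_Icc_one]
  apply Finset.sum_congr rfl
  intro j _
  rw [prod_Icc_one]
  apply Finset.prod_congr rfl
  intro k _
  rw [iterLog_eq_elog, hrs]

lemma Wdsum_eq (m : ℕ) {r s : ℝ} (hrs : r ^ 2 = s) :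
    ∑ j ∈ Finset.Icc 1 m, ∑ l ∈ Finset.Icc 1 j,
      (∏ t ∈ Finset.Icc 1 l, (iterLog t r)⁻¹) * (∏ t ∈ Finset.Icc 1 j, (iterLog t r)⁻¹)
      = Tsum m s := by
  have hP : ∀ j : ℕ, ∏ k ∈ Finset.Icc 1 j, (iterLog k r)⁻¹ = Pprod j s := by
    intro j
    rw [prod_Icc_one]
    apply Finset.prod_congr rfl
    intro k _
    rw [iterLog_eq_elog, hrs]
  rw [sum_Icc_one]
  apply Finset.sum_congr rfl
  intro j _
  rw [sum_Icc_one, Finset.sum_mul]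
  apply Finset.sum_congr rfl
  intro l _
  rw [hP, hP]

section Euclid

variable {d : ℕ}

lemma norm_sq_eq (x : EuclideanSpace ℝ (Fin d)) : ‖x‖ ^ 2 = ∑ i, x i ^ 2 := by
  rw [EuclideanSpace.norm_eq, Real.sq_sqrt (by positivity)]
  exact Finset.sum_congr rfl fun i _ => by rw [Real.norm_eq_abs, sq_abs]

lemma hs_of_hx {m : ℕ} {x : EuclideanSpace ℝ (Fin d)} (hx : iterExp m < ‖x‖) :
    (iterExp m) ^ 2 < ∑ i, x i ^ 2 := by
  rw [← norm_sq_eq]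
  have h0 := iterExp_pos m
  nlinarith

lemma psi_eq (d m : ℕ) (x : EuclideanSpace ℝ (Fin d)) (hx : iterExp m < ‖x‖) :
    ‖x‖ ^ (-(d : ℝ) / 2) * ∏ j ∈ Finset.Icc 1 m, (iterLog j ‖x‖) ^ (-(1 : ℝ) / 2)
      = Real.exp (Gfun d m (∑ i, x i ^ 2)) := by
  have hs : (iterExp m) ^ 2 < ∑ i, x i ^ 2 := hs_of_hx hx
  have hr2 : ‖x‖ ^ 2 = ∑ i, x i ^ 2 := norm_sq_eq x
  have hxpos : 0 < ‖x‖ := lt_trans (iterExp_pos m) hx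
  set s := ∑ i, x i ^ 2 with hsdef
  have hl0 : Real.log ‖x‖ = elog 0 s := by
    show _ = Real.log s / 2
    rw [← hr2, Real.log_pow]; push_cast; ring
  rw [Real.rpow_def_of_pos hxpos]
  have hprod : ∏ j ∈ Finset.Icc 1 m, (iterLog j ‖x‖) ^ (-(1:ℝ)/2)
      = Real.exp (∑ j ∈ Finset.range m, elog (j+1) s * (-(1:ℝ)/2)) := by
    rw [prod_Icc_one, Real.exp_sum]
    apply Finset.prod_congr rfl
    intro j hj
    have hpos : 0 < iterLog (j+1) ‖x‖ := by
      rw [iterLog_eq_elog, hr2]; exact elog_pos (Finset.mem_range.mp hj) hs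
    rw [Real.rpow_def_of_pos hpos]
    congr 1
    rw [iterLog_eq_elog, hr2]
    rfl
  rw [hprod, ← Real.exp_add]
  congr 1
  rw [hl0]
  simp only [Gfun, ← Finset.sum_mul]
  ring

/-- the derivative of `x ↦ ∑ i, x i ^ 2`. -/
lemma hasFDerivAt_usq (x : EuclideanSpace ℝ (Fin d)) :
    HasFDerivAt (fun y : EuclideanSpace ℝ (Fin d) => ∑ i, y i ^ 2)
      (∑ i, (2 * x i) • (EuclideanSpace.proj i :
        EuclideanSpace ℝ (Fin d) →L[ℝ] ℝ)) x := by
  apply HasFDerivAt.fun_sum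
  intro i _
  have h : HasFDerivAt (fun y : EuclideanSpace ℝ (Fin d) => y i)
      (EuclideanSpace.proj i : EuclideanSpace ℝ (Fin d) →L[ℝ] ℝ) x :=
    (EuclideanSpace.proj i : EuclideanSpace ℝ (Fin d) →L[ℝ] ℝ).hasFDerivAt
  have h2 := h.fun_mul h
  have e1 : (fun y : EuclideanSpace ℝ (Fin d) => y i * y i) = fun y => y i ^ 2 := by
    funext y; ring
  rw [e1] at h2
  refine h2.congr_fderiv ?_
  rw [two_mul, add_smul]

lemma clm_apply_single (c : Fin d → ℝ) (j : Fin d) :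
    (∑ i, c i • (EuclideanSpace.proj i : EuclideanSpace ℝ (Fin d) →L[ℝ] ℝ))
      (EuclideanSpace.single j (1:ℝ)) = c j := by
  simp [ContinuousLinearMap.sum_apply, EuclideanSpace.single_apply, mul_ite,
    Finset.sum_ite_eq]

lemma key_identity (d m : ℕ) {r s : ℝ} (hr : iterExp m < r) (hrs : r ^ 2 = s) :
    2 * d * (Real.exp (Gfun d m s) * G1 d m s)
      + 4 * s * (Real.exp (Gfun d m s) * (G1 d m s ^ 2 + G2 d m s))
      = Wpot d m r * Real.exp (Gfun d m s) := by
  have hs : (iterExp m) ^ 2 < s := by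
    rw [← hrs]
    have h0 := iterExp_pos m
    nlinarith
  have hs0 : s ≠ 0 := ne_of_gt (s_pos hs)
  have hW : Wpot d m r = (d : ℝ) * (4 - d) / (4 * s)
      + (1 / s) * Ssum m s + (1 / (4 * s)) * (Ssum m s) ^ 2
      + (1 / (2 * s)) * Tsum m s := by
    rw [Wpot, Wsum_eq m hrs, Wdsum_eq m hrs, hrs]
  rw [hW]
  simp only [G1, G2]
  field_simp
  ring

end Euclid


/-- The comparison function `ψ_{ℓ,m}(x) = |x|^{−d/2} Π_{j=1}^m ln_j(|x|)^{−1/2}` is smooth on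
`{|x| > e_m}` and satisfies `Δψ_{ℓ,m} = W_m ψ_{ℓ,m}` there. -/
theorem psi_ell_eigenvalue_equation (d : ℕ) (hd : 1 ≤ d) (m : ℕ) :
    ContDiffOn ℝ (⊤ : ℕ∞)
      (fun x : EuclideanSpace ℝ (Fin d) =>
        ‖x‖ ^ (-(d : ℝ) / 2) * ∏ j ∈ Finset.Icc 1 m, (iterLog j ‖x‖) ^ (-(1 : ℝ) / 2))
      {x : EuclideanSpace ℝ (Fin d) | iterExp m < ‖x‖} ∧
    ∀ x : EuclideanSpace ℝ (Fin d), iterExp m < ‖x‖ →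
      laplacian
        (fun x : EuclideanSpace ℝ (Fin d) =>
          ‖x‖ ^ (-(d : ℝ) / 2) * ∏ j ∈ Finset.Icc 1 m, (iterLog j ‖x‖) ^ (-(1 : ℝ) / 2)) x
      = Wpot d m ‖x‖ *
        (‖x‖ ^ (-(d : ℝ) / 2) * ∏ j ∈ Finset.Icc 1 m, (iterLog j ‖x‖) ^ (-(1 : ℝ) / 2)) := by
  set ψ := fun x : EuclideanSpace ℝ (Fin d) =>
    ‖x‖ ^ (-(d : ℝ) / 2) * ∏ j ∈ Finset.Icc 1 m, (iterLog j ‖x‖) ^ (-(1 : ℝ) / 2) with hψ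
  set U := {x : EuclideanSpace ℝ (Fin d) | iterExp m < ‖x‖} with hUdef
  have hU : IsOpen U := isOpen_lt continuous_const continuous_norm
  have hrep : ∀ y ∈ U, ψ y = Real.exp (Gfun d m (∑ i, y i ^ 2)) :=
    fun y hy => psi_eq d m y hy
  -- derivative of ψ on U
  have hA : ∀ y ∈ U, HasFDerivAt ψ
      ((Real.exp (Gfun d m (∑ i, y i ^ 2)) * G1 d m (∑ i, y i ^ 2)) •
        (∑ i, (2 * y i) • (EuclideanSpace.proj i :
          EuclideanSpace ℝ (Fin d) →L[ℝ] ℝ))) y := by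
    intro y hy
    have hsy : (iterExp m) ^ 2 < ∑ i, y i ^ 2 := hs_of_hx hy
    have hd1 : HasDerivAt (fun t => Real.exp (Gfun d m t))
        (Real.exp (Gfun d m (∑ i, y i ^ 2)) * G1 d m (∑ i, y i ^ 2)) (∑ i, y i ^ 2) :=
      (hasDerivAt_Gfun hsy d).exp
    have hfd := hd1.comp_hasFDerivAt y (hasFDerivAt_usq y)
    refine hfd.congr_of_eventuallyEq ?_
    filter_upwards [hU.mem_nhds hy] with z hz using hrep z hz
  have hB : ∀ (i : Fin d), ∀ y ∈ U, fderiv ℝ ψ y (EuclideanSpace.single i 1)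
      = (Real.exp (Gfun d m (∑ j, y j ^ 2)) * G1 d m (∑ j, y j ^ 2)) * (2 * y i) := by
    intro i y hy
    rw [(hA y hy).fderiv, ContinuousLinearMap.smul_apply, clm_apply_single]
    simp [smul_eq_mul]
  constructor
  · intro x hx
    have hs : (iterExp m) ^ 2 < ∑ i, x i ^ 2 := hs_of_hx hx
    have hu : ContDiff ℝ (⊤ : ℕ∞) (fun y : EuclideanSpace ℝ (Fin d) => ∑ i, y i ^ 2) := by
      apply ContDiff.sum
      intro i _
      exact ((EuclideanSpace.proj i :
        EuclideanSpace ℝ (Fin d) →L[ℝ] ℝ).contDiff).pow 2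
    have hΦ : ContDiffAt ℝ (⊤ : ℕ∞)
        (fun y : EuclideanSpace ℝ (Fin d) => Real.exp (Gfun d m (∑ i, y i ^ 2))) x :=
      Real.contDiff_exp.contDiffAt.comp x (ContDiffAt.comp (g := Gfun d m) x (contDiffAt_Gfun hs d) hu.contDiffAt)
    have heq : ψ =ᶠ[𝓝 x] fun y => Real.exp (Gfun d m (∑ i, y i ^ 2)) := by
      filter_upwards [hU.mem_nhds hx] with y hy using hrep y hy
    exact (hΦ.congr_of_eventuallyEq heq).contDiffWithinAt
  · intro x hx
    have hs : (iterExp m) ^ 2 < ∑ i, x i ^ 2 := hs_of_hx hx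
    have hc : HasDerivAt (fun t => Real.exp (Gfun d m t) * G1 d m t)
        (Real.exp (Gfun d m (∑ i, x i ^ 2)) *
          (G1 d m (∑ i, x i ^ 2) ^ 2 + G2 d m (∑ i, x i ^ 2))) (∑ i, x i ^ 2) := by
      have h := ((hasDerivAt_Gfun hs d).exp).fun_mul (hasDerivAt_G1 hs d)
      refine h.congr_deriv ?_
      simp only [G1]
      ring
    have hout : ∀ i : Fin d,
        fderiv ℝ (fun y => fderiv ℝ ψ y (EuclideanSpace.single i 1)) x
          (EuclideanSpace.single i 1)
        = Real.exp (Gfun d m (∑ j, x j ^ 2)) *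
            (G1 d m (∑ j, x j ^ 2) ^ 2 + G2 d m (∑ j, x j ^ 2)) * (2 * x i) * (2 * x i)
          + (Real.exp (Gfun d m (∑ j, x j ^ 2)) * G1 d m (∑ j, x j ^ 2)) * 2 := by
      intro i
      have hcu : HasFDerivAt
          (fun y : EuclideanSpace ℝ (Fin d) =>
            Real.exp (Gfun d m (∑ j, y j ^ 2)) * G1 d m (∑ j, y j ^ 2))
          ((Real.exp (Gfun d m (∑ j, x j ^ 2)) *
            (G1 d m (∑ j, x j ^ 2) ^ 2 + G2 d m (∑ j, x j ^ 2))) •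
            (∑ j, (2 * x j) • (EuclideanSpace.proj j :
              EuclideanSpace ℝ (Fin d) →L[ℝ] ℝ))) x :=
        HasDerivAt.comp_hasFDerivAt (h₂ := fun t => Real.exp (Gfun d m t) * G1 d m t) x hc
          (hasFDerivAt_usq x)
      have hmi : HasFDerivAt (fun y : EuclideanSpace ℝ (Fin d) => 2 * y i)
          ((2 : ℝ) • (EuclideanSpace.proj i : EuclideanSpace ℝ (Fin d) →L[ℝ] ℝ)) x :=
        ((EuclideanSpace.proj i :
          EuclideanSpace ℝ (Fin d) →L[ℝ] ℝ).hasFDerivAt).const_mul 2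
      have hgi := hcu.fun_mul hmi
      have h1 : (fun y : EuclideanSpace ℝ (Fin d) =>
          fderiv ℝ ψ y (EuclideanSpace.single i 1)) =ᶠ[𝓝 x]
          (fun y => (Real.exp (Gfun d m (∑ j, y j ^ 2)) * G1 d m (∑ j, y j ^ 2))
            * (2 * y i)) := by
        filter_upwards [hU.mem_nhds hx] with z hz using hB i z hz
      rw [h1.fderiv_eq, hgi.fderiv]
      rw [ContinuousLinearMap.add_apply, ContinuousLinearMap.smul_apply,
        ContinuousLinearMap.smul_apply, ContinuousLinearMap.smul_apply,
        ContinuousLinearMap.smul_apply, clm_apply_single]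
      have hproj : (EuclideanSpace.proj i : EuclideanSpace ℝ (Fin d) →L[ℝ] ℝ)
          (EuclideanSpace.single i 1) = 1 := by
        simp [EuclideanSpace.single_apply]
      rw [hproj]
      simp [smul_eq_mul]
      ring
    have hlap : laplacian ψ x
        = 4 * (∑ i, x i ^ 2) * (Real.exp (Gfun d m (∑ j, x j ^ 2)) *
            (G1 d m (∑ j, x j ^ 2) ^ 2 + G2 d m (∑ j, x j ^ 2)))
          + 2 * d * (Real.exp (Gfun d m (∑ j, x j ^ 2)) * G1 d m (∑ j, x j ^ 2)) := by
      rw [laplacian]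
      rw [Finset.sum_congr rfl fun i _ => hout i]
      rw [Finset.sum_add_distrib, Finset.sum_const, Finset.card_univ, Fintype.card_fin]
      have he : ∀ i : Fin d, Real.exp (Gfun d m (∑ j, x j ^ 2)) *
            (G1 d m (∑ j, x j ^ 2) ^ 2 + G2 d m (∑ j, x j ^ 2)) * (2 * x i) * (2 * x i)
          = (4 * (Real.exp (Gfun d m (∑ j, x j ^ 2)) *
            (G1 d m (∑ j, x j ^ 2) ^ 2 + G2 d m (∑ j, x j ^ 2)))) * (x i ^ 2) :=
        fun i => by ring
      rw [Finset.sum_congr rfl fun i _ => he i, ← Finset.mul_sum]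
      simp only [nsmul_eq_mul]
      ring
    rw [hlap]
    have hk := key_identity d m hx (norm_sq_eq x)
    rw [show (∑ j, x j ^ 2) = ∑ i, x i ^ 2 from rfl] at *
    have hx2 : ‖x‖ ^ (-(d : ℝ) / 2) * ∏ j ∈ Finset.Icc 1 m, (iterLog j ‖x‖) ^ (-(1 : ℝ) / 2)
        = Real.exp (Gfun d m (∑ i, x i ^ 2)) := psi_eq d m x hx
    rw [hx2]
    linarith [hk]

end
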